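/- Let S be a finite set of nonzero vectors in a Euclidean space ℝ^m with S = −S, such that every vector in S has Euclidean norm l or √2·l for a fixed l > 0, and such that for every u ∈ S and every v ∈ S with ‖v‖ = l the inner product satisfies ⟨u,v⟩ ≤ l². Let G be the additive subgroup of ℝ^m generated by S. Then for every x ∈ G, s ∈ S, and integer n ≥ 1, the graph distance in H = Cayley(G,S) satisfies d_H(x, x + ns) = n, and consequently H is Ricci-flat. -/

import Mathlib

open Filter Topology Classical

noncomputable section

namespace RicciFlatPaper

variable {V : Type*}

/-- Degree as the natural cardinality of the neighbor set. -/
def deg (G : SimpleGraph V) (x : V) : ℕ := (G.neighborSet x).ncard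

/-- The probability measure `m_x^α`: mass `α` at `x`, mass `(1-α)/d_x` at each
neighbor of `x`, and `0` elsewhere. -/
def mass (G : SimpleGraph V) (α : ℝ) (x : V) : V → ℝ :=
  fun v => if v = x then α else if G.Adj x v then (1 - α) / (deg G x) else 0

/-- `A` is a (finitely supported, nonnegative) coupling between `m₁` and `m₂`. -/
def IsCoupling (m₁ m₂ : V → ℝ) (A : V → V → ℝ) : Prop :=
  (∀ u v, 0 ≤ A u v) ∧
  (Function.support (fun p : V × V => A p.1 p.2)).Finite ∧
  (∀ u, ∑ᶠ v, A u v = m₁ u) ∧ (∀ v, ∑ᶠ u, A u v = m₂ v)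

/-- The transportation (Wasserstein) distance between two distributions,
with respect to the graph distance of `G`. -/
def W (G : SimpleGraph V) (m₁ m₂ : V → ℝ) : ℝ :=
  sInf {c | ∃ A : V → V → ℝ, IsCoupling m₁ m₂ A ∧
    c = ∑ᶠ p : V × V, A p.1 p.2 * (G.dist p.1 p.2 : ℝ)}

/-- `κ_α(x,y) = 1 - W(m_x^α, m_y^α)`. -/
def kappaAlpha (G : SimpleGraph V) (α : ℝ) (x y : V) : ℝ :=
  1 - W G (mass G α x) (mass G α y)

/-- Lin–Lu–Yau Ricci curvature `κ(x,y) = lim_{α→1} κ_α(x,y)/(1-α)`. -/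
def ricci (G : SimpleGraph V) (x y : V) : ℝ :=
  limUnder (𝓝[<] (1 : ℝ)) (fun α => kappaAlpha G α x y / (1 - α))

/-- A graph is Ricci-flat if the Ricci curvature vanishes on every edge. -/
def RicciFlat (G : SimpleGraph V) : Prop := ∀ x y : V, G.Adj x y → ricci G x y = 0

/-- The edge `xy` lies on a cycle of length `n`. -/
def EdgeInCycleOfLength (G : SimpleGraph V) (x y : V) (n : ℕ) : Prop :=
  ∃ (v : V) (c : G.Walk v v), c.IsCycle ∧ c.length = n ∧ s(x, y) ∈ c.edges

/-- The Cayley graph of an additive group `G` with connection set `S`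
(assumed to satisfy `S = -S` and `0 ∉ S`): `x` and `y` are adjacent iff
`y - x ∈ S`. -/
def cayley (G : Type*) [AddGroup G] (S : Set G) : SimpleGraph G :=
  SimpleGraph.fromRel (fun x y => y - x ∈ S)

/-! ### Auxiliary lemmas -/

section General

variable {Λ : Type*} [AddCommGroup Λ] {T : Set Λ}

lemma cayley_adj (h0 : (0:Λ) ∉ T) (hsym : ∀ t ∈ T, -t ∈ T) {u v : Λ} :
    (cayley Λ T).Adj u v ↔ v - u ∈ T := by
  constructor
  · rintro ⟨hne, h | h⟩
    · exact h
    · simpa using hsym _ h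
  · intro h
    refine ⟨fun he => h0 ?_, Or.inl h⟩
    simpa [he] using h

lemma cayley_neighborSet (h0 : (0:Λ) ∉ T) (hsym : ∀ t ∈ T, -t ∈ T) (x : Λ) :
    (cayley Λ T).neighborSet x = (fun t => x + t) '' T := by
  ext v
  simp only [SimpleGraph.mem_neighborSet, cayley_adj h0 hsym, Set.mem_image]
  constructor
  · intro h; exact ⟨v - x, h, by abel⟩
  · rintro ⟨t, ht, rfl⟩; simpa using ht

lemma cayley_deg (h0 : (0:Λ) ∉ T) (hsym : ∀ t ∈ T, -t ∈ T) (x : Λ) :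
    deg (cayley Λ T) x = T.ncard := by
  rw [deg, cayley_neighborSet h0 hsym,
    Set.ncard_image_of_injective _ (add_right_injective x)]

/-- The finite set carrying the support of `mass (cayley Λ T) α x`. -/
def massFinset (hfin : T.Finite) (x : Λ) : Finset Λ :=
  insert x (hfin.toFinset.image (fun t => x + t))

lemma mass_support_subset (hfin : T.Finite) (h0 : (0:Λ) ∉ T)
    (hsym : ∀ t ∈ T, -t ∈ T) (x : Λ) (α : ℝ) :
    Function.support (mass (cayley Λ T) α x) ⊆ ↑(massFinset hfin x) := by
  intro u hu
  simp only [massFinset, Finset.coe_insert, Set.mem_insert_iff, Finset.coe_image,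
    Set.Finite.coe_toFinset, Set.mem_image]
  by_cases he : u = x
  · exact Or.inl he
  · right
    by_cases hadj : (cayley Λ T).Adj x u
    · exact ⟨u - x, (cayley_adj h0 hsym).1 hadj, by abel⟩
    · exact absurd (by simp [mass, he, hadj]) hu

lemma mass_nonneg {α : ℝ} (hα : α ∈ Set.Icc (0:ℝ) 1) (G : SimpleGraph V) (x u : V) :
    0 ≤ mass G α x u := by
  unfold mass
  split_ifs with h1 h2
  · exact hα.1
  · apply div_nonneg (by linarith [hα.2]) (by positivity)
  · exact le_refl 0

lemma finsum_mul_mass (hfin : T.Finite) (h0 : (0:Λ) ∉ T) (hsym : ∀ t ∈ T, -t ∈ T)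
    (x : Λ) (α : ℝ) (g : Λ → ℝ) :
    ∑ᶠ u, g u * mass (cayley Λ T) α x u
      = g x * α + ∑ t ∈ hfin.toFinset, g (x + t) * ((1 - α) / (T.ncard : ℝ)) := by
  have hx_notmem : x ∉ hfin.toFinset.image (fun t => x + t) := by
    simp only [Finset.mem_image, Set.Finite.mem_toFinset, not_exists]
    rintro t ⟨ht, hxt⟩
    exact h0 (add_eq_left.mp hxt ▸ ht)
  have hsub : Function.support (fun u => g u * mass (cayley Λ T) α x u)
      ⊆ Function.support (mass (cayley Λ T) α x) := by
    intro u hu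
    simp only [Function.mem_support] at hu ⊢
    exact fun h => hu (by rw [h, mul_zero])
  rw [finsum_eq_finset_sum_of_support_subset _
    (hsub.trans (mass_support_subset hfin h0 hsym x α)),
    massFinset, Finset.sum_insert hx_notmem,
    Finset.sum_image (fun a _ b _ h => add_left_cancel h)]
  congr 1
  · simp [mass]
  · apply Finset.sum_congr rfl
    intro t ht
    rw [Set.Finite.mem_toFinset] at ht
    have hne : x + t ≠ x := fun h => h0 (add_eq_left.mp h ▸ ht)
    have hadj : (cayley Λ T).Adj x (x + t) :=
      (cayley_adj h0 hsym).2 (by simpa using ht)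
    simp [mass, hne, hadj, cayley_deg h0 hsym]

lemma finsum_mass (hfin : T.Finite) (h0 : (0:Λ) ∉ T) (hsym : ∀ t ∈ T, -t ∈ T)
    (hT : T.Nonempty) (x : Λ) (α : ℝ) :
    ∑ᶠ u, mass (cayley Λ T) α x u = 1 := by
  have h := finsum_mul_mass hfin h0 hsym x α (fun _ => 1)
  simp only [one_mul] at h
  rw [h, Finset.sum_const, nsmul_eq_mul]
  have hcard : (hfin.toFinset.card : ℝ) = (T.ncard : ℝ) := by
    rw [Set.ncard_eq_toFinset_card T hfin]
  have hd : (T.ncard : ℝ) ≠ 0 := by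
    exact_mod_cast ((Set.ncard_pos hfin).2 hT).ne'
  rw [hcard]
  field_simp
  ring

lemma mass_translate (h0 : (0:Λ) ∉ T) (hsym : ∀ t ∈ T, -t ∈ T) (α : ℝ) (x v t : Λ) :
    mass (cayley Λ T) α (x + t) (v + t) = mass (cayley Λ T) α x v := by
  have h2 : v + t - (x + t) = v - x := by abel
  simp only [mass, cayley_adj h0 hsym, h2, add_left_inj, cayley_deg h0 hsym]

lemma edge_lip (h0 : (0:Λ) ∉ T) (hsym : ∀ t ∈ T, -t ∈ T) {f : Λ → ℝ}
    (hf1 : ∀ t ∈ T, ∀ u, |f (u + t) - f u| ≤ 1) :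
    ∀ u v, (cayley Λ T).Adj u v → |f u - f v| ≤ 1 := by
  intro u v h
  have ht := (cayley_adj h0 hsym).1 h
  have h1 := hf1 _ ht u
  have he : u + (v - u) = v := by abel
  rw [he] at h1
  rwa [abs_sub_comm]

lemma walk_bound {f : Λ → ℝ} (hf : ∀ u v, (cayley Λ T).Adj u v → |f u - f v| ≤ 1)
    {u v : Λ} (p : (cayley Λ T).Walk u v) : |f u - f v| ≤ (p.length : ℝ) := by
  induction p with
  | nil => simp
  | @cons a b c h p ih =>
    have h3 : |f a - f c| ≤ |f a - f b| + |f b - f c| := abs_sub_le _ _ _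
    have h2 := hf a b h
    simp only [SimpleGraph.Walk.length_cons]
    push_cast
    linarith

lemma dist_bound {f : Λ → ℝ} (hf : ∀ u v, (cayley Λ T).Adj u v → |f u - f v| ≤ 1)
    {u v : Λ} (h : (cayley Λ T).Reachable u v) :
    |f u - f v| ≤ ((cayley Λ T).dist u v : ℝ) := by
  obtain ⟨p, hp⟩ := h.exists_walk_length_eq_dist
  rw [← hp]
  exact walk_bound hf p

lemma reachable_walk (h0 : (0:Λ) ∉ T) (hsym : ∀ t ∈ T, -t ∈ T) {s : Λ}
    (hs : s ∈ T) (x : Λ) (n : ℕ) :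
    ∃ p : (cayley Λ T).Walk x (x + n • s), p.length = n := by
  induction n with
  | zero => exact ⟨SimpleGraph.Walk.nil.copy rfl (by simp), by simp⟩
  | succ n ih =>
    obtain ⟨p, hp⟩ := ih
    have hadj : (cayley Λ T).Adj (x + n • s) (x + (n+1) • s) := by
      rw [cayley_adj h0 hsym]
      have he : x + (n+1) • s - (x + n • s) = s := by
        rw [succ_nsmul]; abel
      rw [he]; exact hs
    exact ⟨p.append hadj.toWalk, by simp [hp]⟩

lemma dist_nsmul (h0 : (0:Λ) ∉ T) (hsym : ∀ t ∈ T, -t ∈ T) {s : Λ} (hs : s ∈ T)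
    {f : Λ → ℝ} (hf1 : ∀ t ∈ T, ∀ u, |f (u + t) - f u| ≤ 1)
    (hf2 : ∀ u, f (u + s) = f u - 1) (x : Λ) (n : ℕ) :
    (cayley Λ T).dist x (x + n • s) = n := by
  obtain ⟨p, hp⟩ := reachable_walk h0 hsym hs x n
  have hub : (cayley Λ T).dist x (x + n • s) ≤ n :=
    le_trans (SimpleGraph.dist_le p) (le_of_eq hp)
  have hfval : ∀ k : ℕ, f (x + k • s) = f x - k := by
    intro k
    induction k with
    | zero => simp
    | succ k ih =>
      have he : x + (k+1) • s = (x + k • s) + s := by rw [succ_nsmul]; abel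
      rw [he, hf2, ih]
      push_cast
      ring
  have hlb : (n : ℝ) ≤ ((cayley Λ T).dist x (x + n • s) : ℝ) := by
    have h1 := dist_bound (edge_lip h0 hsym hf1) p.reachable
    rw [hfval n] at h1
    have h2 : |f x - (f x - (n:ℝ))| = n := by
      rw [show f x - (f x - (n:ℝ)) = (n:ℝ) by ring, abs_of_nonneg (by positivity)]
    rw [h2] at h1
    exact h1
  have hlb' : n ≤ (cayley Λ T).dist x (x + n • s) := by exact_mod_cast hlb
  omega

lemma W_eq_one (hfin : T.Finite) (h0 : (0:Λ) ∉ T) (hsym : ∀ t ∈ T, -t ∈ T)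
    {s : Λ} (hs : s ∈ T) {f : Λ → ℝ}
    (hf1 : ∀ t ∈ T, ∀ u, |f (u + t) - f u| ≤ 1)
    (hf2 : ∀ u, f (u + s) = f u - 1)
    (x : Λ) {α : ℝ} (hα : α ∈ Set.Icc (0:ℝ) 1) :
    W (cayley Λ T) (mass (cayley Λ T) α x) (mass (cayley Λ T) α (x + s)) = 1 := by
  have hadj : ∀ u : Λ, (cayley Λ T).Adj u (u + s) := fun u =>
    (cayley_adj h0 hsym).2 (by simpa using hs)
  have hm2 : ∀ v, mass (cayley Λ T) α (x + s) v = mass (cayley Λ T) α x (v - s) := by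
    intro v
    have h := mass_translate h0 hsym α x (v - s) s
    rw [sub_add_cancel] at h
    exact h
  -- the explicit coupling
  set A : Λ → Λ → ℝ := fun u v => if v = u + s then mass (cayley Λ T) α x u else 0 with hAdef
  have hApos : ∀ u v, 0 ≤ A u v := by
    intro u v
    simp only [hAdef]
    split_ifs
    · exact mass_nonneg hα _ _ _
    · exact le_refl 0
  have hAfin : (Function.support (fun p : Λ × Λ => A p.1 p.2)).Finite := by
    apply Set.Finite.subset
      (Set.Finite.image (fun u => (u, u + s)) (Finset.finite_toSet (massFinset hfin x)))
    rintro ⟨u, v⟩ hp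
    simp only [Function.mem_support, hAdef] at hp
    by_cases hv : v = u + s
    · subst hv
      refine ⟨u, mass_support_subset hfin h0 hsym x α ?_, rfl⟩
      simpa using hp
    · simp [hv] at hp
  have hAm1 : ∀ u, ∑ᶠ v, A u v = mass (cayley Λ T) α x u := by
    intro u
    rw [finsum_eq_single _ (u + s) (fun v hv => by simp [hAdef, hv])]
    simp [hAdef]
  have hAm2 : ∀ v, ∑ᶠ u, A u v = mass (cayley Λ T) α (x + s) v := by
    intro v
    have h1 : ∀ u, u ≠ v - s → A u v = 0 := by
      intro u hu
      have hne : v ≠ u + s := fun h => hu (by rw [h]; abel)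
      simp [hAdef, hne]
    rw [finsum_eq_single _ (v - s) h1, hm2 v]
    simp [hAdef, sub_add_cancel]
  have hcost : ∑ᶠ p : Λ × Λ, A p.1 p.2 * ((cayley Λ T).dist p.1 p.2 : ℝ) = 1 := by
    have hsub : Function.support
        (fun p : Λ × Λ => A p.1 p.2 * ((cayley Λ T).dist p.1 p.2 : ℝ))
        ⊆ ↑((massFinset hfin x).image (fun u => (u, u + s))) := by
      rintro ⟨u, v⟩ hp
      simp only [Function.mem_support, hAdef] at hp
      by_cases hv : v = u + s
      · subst hv
        refine Finset.mem_coe.2 (Finset.mem_image.2 ⟨u, ?_, rfl⟩)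
        apply (mass_support_subset hfin h0 hsym x α)
        simp only [Function.mem_support]
        intro h
        exact hp (by simp [h])
      · simp [hv] at hp
    rw [finsum_eq_finset_sum_of_support_subset _ hsub,
      Finset.sum_image (fun a _ b _ h => congrArg Prod.fst h)]
    have hterm : ∀ u ∈ massFinset hfin x,
        A u (u + s) * (((cayley Λ T).dist u (u + s) : ℕ) : ℝ)
          = mass (cayley Λ T) α x u := by
      intro u _
      rw [SimpleGraph.dist_eq_one_iff_adj.2 (hadj u)]
      simp [hAdef]
    rw [Finset.sum_congr rfl hterm,
      ← finsum_eq_finset_sum_of_support_subset _ (mass_support_subset hfin h0 hsym x α)]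
    exact finsum_mass hfin h0 hsym ⟨s, hs⟩ x α
  have hmem : (1:ℝ) ∈ {c | ∃ A : Λ → Λ → ℝ,
      IsCoupling (mass (cayley Λ T) α x) (mass (cayley Λ T) α (x + s)) A ∧
      c = ∑ᶠ p : Λ × Λ, A p.1 p.2 * ((cayley Λ T).dist p.1 p.2 : ℝ)} :=
    ⟨A, ⟨hApos, hAfin, hAm1, hAm2⟩, hcost.symm⟩
  -- lower bound
  have hlow : ∀ c ∈ {c | ∃ A : Λ → Λ → ℝ,
      IsCoupling (mass (cayley Λ T) α x) (mass (cayley Λ T) α (x + s)) A ∧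
      c = ∑ᶠ p : Λ × Λ, A p.1 p.2 * ((cayley Λ T).dist p.1 p.2 : ℝ)}, 1 ≤ c := by
    rintro c ⟨B, ⟨hpos, hsupp, hmar1, hmar2⟩, rfl⟩
    classical
    set F : Finset (Λ × Λ) := hsupp.toFinset with hF
    have hmemF : ∀ u v, B u v ≠ 0 → (u, v) ∈ F := by
      intro u v h
      simpa [hF, Set.Finite.mem_toFinset, Function.mem_support] using h
    set F1 := F.image Prod.fst with hF1
    set F2 := F.image Prod.snd with hF2
    have hrow : ∀ u, Function.support (fun v => B u v) ⊆ ↑F2 := by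
      intro u v hv
      exact Finset.mem_coe.2 (Finset.mem_image.2 ⟨(u,v), hmemF u v hv, rfl⟩)
    have hcol : ∀ v, Function.support (fun u => B u v) ⊆ ↑F1 := by
      intro v u hu
      exact Finset.mem_coe.2 (Finset.mem_image.2 ⟨(u,v), hmemF u v hu, rfl⟩)
    have hflip := edge_lip h0 hsym hf1
    have hxy : (cayley Λ T).Reachable x (x + s) := (hadj x).reachable
    have hreachbase : ∀ y u : Λ, mass (cayley Λ T) α y u ≠ 0 →
        (cayley Λ T).Reachable y u := by
      intro y u hu
      by_cases he : u = y
      · exact he ▸ SimpleGraph.Reachable.refl u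
      · by_cases ha : (cayley Λ T).Adj y u
        · exact ha.reachable
        · exact absurd (by simp [mass, he, ha]) hu
    have hdistf : ∀ u v, B u v ≠ 0 →
        f u - f v ≤ ((cayley Λ T).dist u v : ℝ) := by
      intro u v h
      have hBpos : 0 < B u v := (hpos u v).lt_of_ne (Ne.symm h)
      have hu : mass (cayley Λ T) α x u ≠ 0 := by
        rw [← hmar1 u]
        have hle : B u v ≤ ∑ᶠ v', B u v' :=
          single_le_finsum v (Set.Finite.subset (Finset.finite_toSet F2) (hrow u)) (hpos u)
        intro hz
        rw [hz] at hle
        linarith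
      have hv : mass (cayley Λ T) α (x + s) v ≠ 0 := by
        rw [← hmar2 v]
        have hle : B u v ≤ ∑ᶠ u', B u' v :=
          single_le_finsum u (Set.Finite.subset (Finset.finite_toSet F1) (hcol v)) (fun j => hpos j v)
        intro hz
        rw [hz] at hle
        linarith
      have hreach : (cayley Λ T).Reachable u v :=
        ((hreachbase x u hu).symm.trans hxy).trans (hreachbase (x + s) v hv)
      exact le_trans (le_abs_self _) (dist_bound hflip hreach)
    have hsum1 : ∑ᶠ p : Λ × Λ, B p.1 p.2 * ((cayley Λ T).dist p.1 p.2 : ℝ)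
        = ∑ p ∈ F, B p.1 p.2 * ((cayley Λ T).dist p.1 p.2 : ℝ) := by
      apply finsum_eq_finset_sum_of_support_subset
      intro p hp
      simp only [Function.mem_support] at hp
      exact Finset.mem_coe.2 (hmemF p.1 p.2 (fun h => hp (by simp [h])))
    have hsum2 : ∑ p ∈ F, B p.1 p.2 * (f p.1 - f p.2)
        ≤ ∑ p ∈ F, B p.1 p.2 * ((cayley Λ T).dist p.1 p.2 : ℝ) := by
      apply Finset.sum_le_sum
      intro p hp
      have hB : B p.1 p.2 ≠ 0 := by
        simpa [hF, Set.Finite.mem_toFinset, Function.mem_support] using hp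
      exact mul_le_mul_of_nonneg_left (hdistf _ _ hB) (hpos _ _)
    have hm1supp : ∀ u, mass (cayley Λ T) α x u ≠ 0 → u ∈ F1 := by
      intro u hu
      rw [← hmar1 u] at hu
      by_contra hnF
      apply hu
      apply finsum_eq_zero_of_forall_eq_zero
      intro v
      by_contra hB
      exact hnF (Finset.mem_image_of_mem _ (hmemF u v hB))
    have hm2supp : ∀ v, mass (cayley Λ T) α (x + s) v ≠ 0 → v ∈ F2 := by
      intro v hv
      rw [← hmar2 v] at hv
      by_contra hnF
      apply hv
      apply finsum_eq_zero_of_forall_eq_zero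
      intro u
      by_contra hB
      exact hnF (Finset.mem_image_of_mem _ (hmemF u v hB))
    have key : ∑ p ∈ F, B p.1 p.2 * (f p.1 - f p.2) = 1 := by
      have hFsub : F ⊆ F1 ×ˢ F2 := by
        intro p hp
        exact Finset.mem_product.2
          ⟨Finset.mem_image_of_mem _ hp, Finset.mem_image_of_mem _ hp⟩
      have hzero : ∀ p ∈ F1 ×ˢ F2, p ∉ F → B p.1 p.2 * (f p.1 - f p.2) = 0 := by
        intro p _ hp
        have hB : B p.1 p.2 = 0 := by
          by_contra h
          exact hp (hmemF _ _ h)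
        rw [hB, zero_mul]
      rw [Finset.sum_subset hFsub hzero, Finset.sum_product]
      have e1 : ∑ u ∈ F1, ∑ v ∈ F2, B u v * (f u - f v)
          = (∑ u ∈ F1, f u * mass (cayley Λ T) α x u)
            - ∑ v ∈ F2, f v * mass (cayley Λ T) α (x + s) v := by
        calc ∑ u ∈ F1, ∑ v ∈ F2, B u v * (f u - f v)
            = ∑ u ∈ F1, ((∑ v ∈ F2, B u v) * f u - ∑ v ∈ F2, B u v * f v) := by
              apply Finset.sum_congr rfl
              intro u _
              rw [Finset.sum_mul, ← Finset.sum_sub_distrib]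
              exact Finset.sum_congr rfl fun v _ => by ring
          _ = (∑ u ∈ F1, (∑ v ∈ F2, B u v) * f u)
              - ∑ u ∈ F1, ∑ v ∈ F2, B u v * f v := Finset.sum_sub_distrib _ _
          _ = (∑ u ∈ F1, f u * mass (cayley Λ T) α x u)
              - ∑ v ∈ F2, f v * mass (cayley Λ T) α (x + s) v := by
              congr 1
              · apply Finset.sum_congr rfl
                intro u _
                rw [← finsum_eq_finset_sum_of_support_subset _ (hrow u), hmar1 u, mul_comm]
              · rw [Finset.sum_comm]
                apply Finset.sum_congr rfl
                intro v _
                rw [← Finset.sum_mul, ← finsum_eq_finset_sum_of_support_subset _ (hcol v),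
                  hmar2 v, mul_comm]
      rw [e1]
      have hfm1 : ∑ u ∈ F1, f u * mass (cayley Λ T) α x u
          = ∑ᶠ u, f u * mass (cayley Λ T) α x u := by
        symm
        apply finsum_eq_finset_sum_of_support_subset
        intro u hu
        simp only [Function.mem_support] at hu
        exact Finset.mem_coe.2 (hm1supp u (fun h => hu (by rw [h, mul_zero])))
      have hfm2 : ∑ v ∈ F2, f v * mass (cayley Λ T) α (x + s) v
          = ∑ᶠ v, f v * mass (cayley Λ T) α (x + s) v := by
        symm
        apply finsum_eq_finset_sum_of_support_subset
        intro v hv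
        simp only [Function.mem_support] at hv
        exact Finset.mem_coe.2 (hm2supp v (fun h => hv (by rw [h, mul_zero])))
      rw [hfm1, hfm2, finsum_mul_mass hfin h0 hsym x α f,
        finsum_mul_mass hfin h0 hsym (x + s) α f]
      have hfx : f (x + s) = f x - 1 := hf2 x
      have hft : ∀ t ∈ hfin.toFinset,
          f (x + s + t) * ((1 - α) / (T.ncard : ℝ))
            = (f (x + t) - 1) * ((1 - α) / (T.ncard : ℝ)) := by
        intro t _
        rw [add_right_comm, hf2]
      rw [hfx, Finset.sum_congr rfl hft]
      have hsplit : ∑ t ∈ hfin.toFinset, (f (x + t) - 1) * ((1 - α) / (T.ncard : ℝ))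
          = (∑ t ∈ hfin.toFinset, f (x + t) * ((1 - α) / (T.ncard : ℝ)))
            - ∑ _t ∈ hfin.toFinset, ((1 - α) / (T.ncard : ℝ)) := by
        rw [← Finset.sum_sub_distrib]
        exact Finset.sum_congr rfl fun t _ => by ring
      rw [hsplit, Finset.sum_const, nsmul_eq_mul]
      have hcard : (hfin.toFinset.card : ℝ) = (T.ncard : ℝ) := by
        rw [Set.ncard_eq_toFinset_card T hfin]
      have hd : (T.ncard : ℝ) ≠ 0 := by
        exact_mod_cast ((Set.ncard_pos hfin).2 ⟨s, hs⟩).ne'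
      rw [hcard]
      have hdc : (T.ncard : ℝ) * ((1 - α) / (T.ncard : ℝ)) = 1 - α := by
        field_simp
      rw [hdc]
      ring
    rw [hsum1, ← key]
    exact hsum2
  exact le_antisymm (csInf_le ⟨1, hlow⟩ hmem) (le_csInf ⟨1, hmem⟩ hlow)

lemma ricci_zero (hfin : T.Finite) (h0 : (0:Λ) ∉ T) (hsym : ∀ t ∈ T, -t ∈ T)
    {s : Λ} (hs : s ∈ T) {f : Λ → ℝ}
    (hf1 : ∀ t ∈ T, ∀ u, |f (u + t) - f u| ≤ 1)
    (hf2 : ∀ u, f (u + s) = f u - 1) (x : Λ) :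
    ricci (cayley Λ T) x (x + s) = 0 := by
  have hev : (fun α => kappaAlpha (cayley Λ T) α x (x + s) / (1 - α))
      =ᶠ[𝓝[<] (1:ℝ)] fun _ => (0:ℝ) := by
    filter_upwards [Ioo_mem_nhdsLT_of_mem
      (Set.mem_Ioc.2 ⟨zero_lt_one, le_refl (1:ℝ)⟩)] with α hα
    rw [kappaAlpha, W_eq_one hfin h0 hsym hs hf1 hf2 x ⟨hα.1.le, hα.2.le⟩]
    simp
  rw [ricci]
  exact Filter.Tendsto.limUnder_eq (Filter.Tendsto.congr' hev.symm tendsto_const_nhds)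

end General

section Euclidean

lemma key_inner {m : ℕ} {S : Set (EuclideanSpace ℝ (Fin m))} {l : ℝ} (hl : 0 < l)
    (hnorm : ∀ s ∈ S, ‖s‖ = l ∨ ‖s‖ = Real.sqrt 2 * l)
    (hinner : ∀ u ∈ S, ∀ v ∈ S, ‖v‖ = l → inner ℝ u v ≤ (l ^ 2 : ℝ)) :
    ∀ a ∈ S, ∀ b ∈ S, inner ℝ a b ≤ ‖b‖ ^ 2 := by
  intro a ha b hb
  rcases hnorm b hb with h | h
  · rw [h]
    exact hinner a ha b hb h
  · have h22 : Real.sqrt 2 ^ 2 = 2 := Real.sq_sqrt (by norm_num)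
    have hb2 : ‖b‖ ^ 2 = 2 * l ^ 2 := by
      rw [h, mul_pow, h22]
    rcases hnorm a ha with h' | h'
    · have h1 : inner ℝ a b = inner ℝ b a := (real_inner_comm a b).symm
      have h2 := hinner b hb a ha h'
      nlinarith [sq_nonneg l]
    · have h3 := real_inner_le_norm a b
      rw [h', h] at h3
      nlinarith [Real.sqrt_nonneg 2]

end Euclidean

/-- Let `S` be a finite symmetric set of nonzero vectors in
`ℝ^m`, each of norm `l` or `√2·l` for a fixed `l > 0`, such that
`⟪u,v⟫ ≤ l²` whenever `u ∈ S` and `v ∈ S` has norm `l`.  Let `Λ` be the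
additive subgroup generated by `S`.  Then in `H = Cayley(Λ,S)` one has
`d_H(x, x + n•s) = n` for every `x ∈ Λ`, `s ∈ S`, `n ≥ 1`, and consequently
`H` is Ricci-flat. -/
theorem ricciFlat_cayley_root_lattice_two_lengths
    {m : ℕ} (S : Set (EuclideanSpace ℝ (Fin m))) (hfin : S.Finite)
    (h0 : (0 : EuclideanSpace ℝ (Fin m)) ∉ S) (hsymm : -S = S)
    (l : ℝ) (hl : 0 < l)
    (hnorm : ∀ s ∈ S, ‖s‖ = l ∨ ‖s‖ = Real.sqrt 2 * l)
    (hinner : ∀ u ∈ S, ∀ v ∈ S, ‖v‖ = l → inner ℝ u v ≤ (l ^ 2 : ℝ)) :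
    ∀ (S' : Set (AddSubgroup.closure S)),
      S' = {g : AddSubgroup.closure S | (g : EuclideanSpace ℝ (Fin m)) ∈ S} →
      (∀ (x : AddSubgroup.closure S), ∀ s ∈ S', ∀ n : ℕ, 1 ≤ n →
        (cayley (AddSubgroup.closure S) S').dist x (x + n • s) = n) ∧
      RicciFlat (cayley (AddSubgroup.closure S) S') := by
  intro S' hS'
  subst hS'
  have h0' : (0 : AddSubgroup.closure S) ∉
      {g : AddSubgroup.closure S | (g : EuclideanSpace ℝ (Fin m)) ∈ S} := by
    simpa using h0
  have hsym' : ∀ t ∈ {g : AddSubgroup.closure S | (g : EuclideanSpace ℝ (Fin m)) ∈ S},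
      -t ∈ {g : AddSubgroup.closure S | (g : EuclideanSpace ℝ (Fin m)) ∈ S} := by
    intro t ht
    simp only [Set.mem_setOf_eq, AddSubgroup.coe_neg] at ht ⊢
    have h1 : -(t : EuclideanSpace ℝ (Fin m)) ∈ -S := Set.neg_mem_neg.2 ht
    rwa [hsymm] at h1
  have hfin' : {g : AddSubgroup.closure S | (g : EuclideanSpace ℝ (Fin m)) ∈ S}.Finite := by
    have heq : {g : AddSubgroup.closure S | (g : EuclideanSpace ℝ (Fin m)) ∈ S}
        = (Subtype.val : AddSubgroup.closure S → EuclideanSpace ℝ (Fin m)) ⁻¹' S := rfl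
    rw [heq]
    exact Set.Finite.preimage Subtype.val_injective.injOn hfin
  have hkey := key_inner hl hnorm hinner
  have main : ∀ s : AddSubgroup.closure S, (s : EuclideanSpace ℝ (Fin m)) ∈ S →
      ∃ f : AddSubgroup.closure S → ℝ,
        (∀ t ∈ {g : AddSubgroup.closure S | (g : EuclideanSpace ℝ (Fin m)) ∈ S},
          ∀ u, |f (u + t) - f u| ≤ 1) ∧ (∀ u, f (u + s) = f u - 1) := by
    intro s hsS
    have hsne : (s : EuclideanSpace ℝ (Fin m)) ≠ 0 := fun h => h0 (h ▸ hsS)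
    have hs2 : (0:ℝ) < ‖(s : EuclideanSpace ℝ (Fin m))‖ ^ 2 :=
      pow_pos (norm_pos_iff.mpr hsne) 2
    refine ⟨fun u => -(inner ℝ ((u : EuclideanSpace ℝ (Fin m)))
      ((s : EuclideanSpace ℝ (Fin m))) : ℝ) / ‖(s : EuclideanSpace ℝ (Fin m))‖ ^ 2, ?_, ?_⟩
    · intro t ht u
      simp only [Set.mem_setOf_eq] at ht
      have h1 : (inner ℝ ((t : EuclideanSpace ℝ (Fin m)))
          ((s : EuclideanSpace ℝ (Fin m))) : ℝ)
          ≤ ‖(s : EuclideanSpace ℝ (Fin m))‖ ^ 2 := hkey _ ht _ hsS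
      have htneg : -(t : EuclideanSpace ℝ (Fin m)) ∈ S := by
        have := Set.neg_mem_neg.2 ht
        rwa [hsymm] at this
      have h2 : (inner ℝ (-(t : EuclideanSpace ℝ (Fin m)))
          ((s : EuclideanSpace ℝ (Fin m))) : ℝ)
          ≤ ‖(s : EuclideanSpace ℝ (Fin m))‖ ^ 2 := hkey _ htneg _ hsS
      rw [inner_neg_left] at h2
      have hadd : ((u + t : AddSubgroup.closure S) : EuclideanSpace ℝ (Fin m))
          = (u : EuclideanSpace ℝ (Fin m)) + (t : EuclideanSpace ℝ (Fin m)) := rfl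
      have heq : -(inner ℝ (((u + t : AddSubgroup.closure S) : EuclideanSpace ℝ (Fin m)))
            ((s : EuclideanSpace ℝ (Fin m))) : ℝ) / ‖(s : EuclideanSpace ℝ (Fin m))‖ ^ 2
          - (-(inner ℝ ((u : EuclideanSpace ℝ (Fin m)))
            ((s : EuclideanSpace ℝ (Fin m))) : ℝ) / ‖(s : EuclideanSpace ℝ (Fin m))‖ ^ 2)
          = -(inner ℝ ((t : EuclideanSpace ℝ (Fin m)))
            ((s : EuclideanSpace ℝ (Fin m))) : ℝ) / ‖(s : EuclideanSpace ℝ (Fin m))‖ ^ 2 := by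
        rw [hadd, inner_add_left]
        ring
      rw [heq, abs_div, abs_of_pos hs2, div_le_one hs2, abs_neg, abs_le]
      exact ⟨by linarith, h1⟩
    · intro u
      have hadd : ((u + s : AddSubgroup.closure S) : EuclideanSpace ℝ (Fin m))
          = (u : EuclideanSpace ℝ (Fin m)) + (s : EuclideanSpace ℝ (Fin m)) := rfl
      simp only []
      rw [hadd, inner_add_left, real_inner_self_eq_norm_sq]
      field_simp
      ring
  constructor
  · intro x s hs n _hn
    obtain ⟨f, hf1, hf2⟩ := main s hs
    exact dist_nsmul h0' hsym' hs hf1 hf2 x n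
  · intro x y hxy
    have hs : y - x ∈ {g : AddSubgroup.closure S | (g : EuclideanSpace ℝ (Fin m)) ∈ S} :=
      (cayley_adj h0' hsym').1 hxy
    obtain ⟨f, hf1, hf2⟩ := main (y - x) hs
    have hy : y = x + (y - x) := by abel
    have hz := ricci_zero hfin' h0' hsym' hs hf1 hf2 x
    rw [← hy] at hz
    exact hz

end RicciFlatPaper

end
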